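/- (Main proposition) Let φ : ℝ^d → ℝ^p be a feature map, f̄ : ℝ^p → ℝ an L-Lipschitz classifier, and δ > 0. Suppose every in-distribution point x with label y ∈ {1,2} satisfies (a) correct classification: f̄(φ(x)) > 0 if y = 1 and f̄(φ(x)) < 0 if y = 2, and (b) energy margin: E(f̄(φ(x))) < η, where E(u) = -log(exp(u/2) + exp(-u/2)). Suppose every covariate-shifted point x_c with label y has a corresponding in-distribution point x with the same label y such that ‖φ(x_c) - φ(x)‖ < δ. If η < -log 2 - (1/2) L δ, then every covariate-shifted point is classified correctly (f̄(φ(x_c)) > 0 if y = 1, f̄(φ(x_c)) < 0 if y = 2) and detected as in-distribution (E(f̄(φ(x_c))) < 0). -/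
import Mathlib


noncomputable def E (u : ℝ) : ℝ := -Real.log (Real.exp (u / 2) + Real.exp (-u / 2))

lemma E_lower (u : ℝ) : -Real.log 2 - |u| / 2 ≤ E u := by
  unfold E
  have h1 : Real.exp (u / 2) ≤ Real.exp (|u| / 2) :=
    Real.exp_le_exp.2 (by linarith [le_abs_self u])
  have h2 : Real.exp (-(u / 2)) ≤ Real.exp (|u| / 2) :=
    Real.exp_le_exp.2 (by linarith [neg_abs_le u])
  have hpos : (0:ℝ) < Real.exp (u / 2) + Real.exp (-(u / 2)) := by positivity
  have hub : Real.exp (u / 2) + Real.exp (-(u / 2)) ≤ 2 * Real.exp (|u| / 2) := by linarith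
  have hlog := Real.log_le_log (by positivity) hub
  rw [Real.log_mul (by norm_num) (Real.exp_ne_zero _), Real.log_exp] at hlog
  have : -u / 2 = -(u / 2) := by ring
  rw [this]
  linarith

lemma E_neg (u : ℝ) : E u < 0 := by
  unfold E
  have h : (1:ℝ) < Real.exp (u / 2) + Real.exp (-u / 2) := by
    rcases le_or_gt 0 u with h' | h'
    · have : (1:ℝ) ≤ Real.exp (u / 2) := Real.one_le_exp (by linarith)
      linarith [Real.exp_pos (-u / 2)]
    · have : (1:ℝ) ≤ Real.exp (-u / 2) := Real.one_le_exp (by linarith)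
      linarith [Real.exp_pos (u / 2)]
  linarith [Real.log_pos h]

/-- Main proposition: with energy margin `η < -log 2 - Lδ/2` on correctly
classified ID points, every covariate-shifted point (within feature distance `δ`
of a same-labeled ID point) is classified correctly and detected as IN. -/
theorem covariate_correct_and_in (d p : ℕ) (L δ η : ℝ) (hL : 0 ≤ L) (hδ : 0 < δ)
    (hη : η < -Real.log 2 - (1 / 2) * L * δ)
    (φ : EuclideanSpace ℝ (Fin d) → EuclideanSpace ℝ (Fin p))
    (f : EuclideanSpace ℝ (Fin p) → ℝ)
    (hf : ∀ z z' : EuclideanSpace ℝ (Fin p), |f z - f z'| ≤ L * ‖z - z'‖)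
    (xc x : EuclideanSpace ℝ (Fin d)) (y : ℕ) (hy : y = 1 ∨ y = 2)
    (hcls1 : y = 1 → f (φ x) > 0) (hcls2 : y = 2 → f (φ x) < 0)
    (hmargin : E (f (φ x)) < η)
    (hclose : ‖φ xc - φ x‖ < δ) :
    (y = 1 → f (φ xc) > 0) ∧ (y = 2 → f (φ xc) < 0) ∧ E (f (φ xc)) < 0 := by
  set u := f (φ x) with hu
  set v := f (φ xc) with hv
  have habs : L * δ < |u| := by
    have := E_lower u
    nlinarith
  have hdiff : |v - u| ≤ L * δ := by
    calc |v - u| ≤ L * ‖φ xc - φ x‖ := hf _ _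
    _ ≤ L * δ := by nlinarith [norm_nonneg (φ xc - φ x)]
  refine ⟨?_, ?_, E_neg v⟩
  · intro h1
    have hu0 := hcls1 h1
    have : |u| = u := abs_of_pos hu0
    have := neg_abs_le (v - u)
    linarith
  · intro h2
    have hu0 := hcls2 h2
    have : |u| = -u := abs_of_neg hu0
    have := le_abs_self (v - u)
    linarith
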